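/- arXiv:1009.5314 — 6 statements merged into one kernel-verified Lean document; each statement's English description precedes it below -/
import Mathlib

section
/- Let f be a continuous real-valued function on a closed interval [a,b]. If for each x ∈ (a,b) either the left derivative of f at x exists and vanishes, or the right derivative of f at x exists and vanishes, then f is constant on [a,b]. -/
/-!
For `ε > 0`, the function `g t = f t - ε t` has a negative one-sided derivative at each interior
point. If `g x < g y` for some `x < y`, then for every level `v` strictly between them the last
point `c` of `[x, y]` with `g c = v` has `g > v` just to its right; a negative right derivative
at `c` is impossible, so `g` has a negative left derivative there and `c` is a strict local
minimum of `g`. A function on `ℝ` has only countably many strict local minima, but there are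
uncountably many levels `v`. Hence `f - ε t` is antitone for every `ε > 0`, so `f` is antitone,
and so is `-f`.
-/

open Set Filter Topology

def IsStrictLocalMin {X β : Type*} [TopologicalSpace X] [Preorder β] (g : X → β) (x : X) : Prop :=
  ∀ᶠ t in 𝓝[≠] x, g x < g t

theorem countable_setOf_isStrictLocalMin {X β : Type*} [TopologicalSpace X]
    [SecondCountableTopology X] [Preorder β] (g : X → β) :
    {x | IsStrictLocalMin g x}.Countable := by
  have hB := TopologicalSpace.isBasis_countableBasis X
  have hU : ∀ x ∈ {x | IsStrictLocalMin g x}, ∃ U ∈ TopologicalSpace.countableBasis X,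
      x ∈ U ∧ ∀ t ∈ U, t ≠ x → g x < g t := by
    intro x hx
    obtain ⟨V, hV, hVx⟩ := (eventually_nhdsWithin_iff.1 hx).exists_mem
    obtain ⟨U, hUB, hxU, hUV⟩ := hB.mem_nhds_iff.1 hV
    exact ⟨U, hUB, hxU, fun t ht => hVx t (hUV ht)⟩
  choose! U hUB hxU hmin using hU
  -- two strict local minima sharing a basic neighbourhood would each lie strictly below the other
  refine MapsTo.countable_of_injOn hUB (fun x hx y hy hxy => ?_)
    (TopologicalSpace.countable_countableBasis X)
  by_contra hne
  exact lt_asymm (hmin x hx y (hxy ▸ hxU y hy) (Ne.symm hne)) (hmin y hy x (hxy ▸ hxU x hx) hne)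

theorem exists_mem_Ioo_eq_and_forall_Ioc_lt {α δ : Type*} [ConditionallyCompleteLinearOrder α]
    [TopologicalSpace α] [OrderTopology α] [DenselyOrdered α] [LinearOrder δ]
    [TopologicalSpace δ] [OrderClosedTopology δ] {g : α → δ} {x y : α} {v : δ}
    (hxy : x ≤ y) (hg : ContinuousOn g (Icc x y)) (hv : v ∈ Ioo (g x) (g y)) :
    ∃ c ∈ Ioo x y, g c = v ∧ ∀ t ∈ Ioc c y, v < g t := by
  set S := Icc x y ∩ g ⁻¹' Iic v
  have hS : IsCompact S :=
    isCompact_Icc.of_isClosed_subset (hg.preimage_isClosed_of_isClosed isClosed_Icc isClosed_Iic)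
      inter_subset_left
  obtain ⟨c, ⟨hc, hgc⟩, hmax⟩ := hS.exists_isGreatest ⟨x, ⟨left_mem_Icc.2 hxy, hv.1.le⟩⟩
  have hright : ∀ t ∈ Ioc c y, v < g t := fun t ht =>
    lt_of_not_ge fun hgt => ht.1.not_ge (hmax ⟨⟨hc.1.trans ht.1.le, ht.2⟩, hgt⟩)
  obtain ⟨t, ht, hgt⟩ :=
    intermediate_value_Icc hc.2 (hg.mono (Icc_subset_Icc_left hc.1)) ⟨hgc, hv.2.le⟩
  obtain rfl : t = c := le_antisymm (hmax ⟨⟨hc.1.trans ht.1, ht.2⟩, hgt.le⟩) ht.1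
  refine ⟨t, ⟨lt_of_le_of_ne hc.1 ?_, lt_of_le_of_ne hc.2 ?_⟩, hgt, hright⟩
  · rintro rfl; exact hv.1.ne hgt
  · rintro rfl; exact hv.2.ne' hgt

section Deriv

variable {g : ℝ → ℝ} {d c : ℝ}

theorem HasDerivWithinAt.eventually_nhdsLT_lt_of_neg (hg : HasDerivWithinAt g d (Iio c) c)
    (hd : d < 0) : ∀ᶠ t in 𝓝[<] c, g c < g t := by
  filter_upwards [hg.limsup_slope_le' (lt_irrefl c) hd, self_mem_nhdsWithin] with t hs ht
  rw [slope_def_field, div_lt_iff_of_neg (sub_neg.2 ht)] at hs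
  linarith

theorem HasDerivWithinAt.eventually_nhdsGT_lt_of_neg (hg : HasDerivWithinAt g d (Ioi c) c)
    (hd : d < 0) : ∀ᶠ t in 𝓝[>] c, g t < g c := by
  filter_upwards [hg.limsup_slope_le' (lt_irrefl c) hd, self_mem_nhdsWithin] with t hs ht
  rw [slope_def_field, div_lt_iff₀ (sub_pos.2 ht)] at hs
  linarith

end Deriv

theorem antitoneOn_of_one_sided_hasDerivWithinAt_neg {g : ℝ → ℝ} {a b : ℝ}
    (hg : ContinuousOn g (Icc a b))
    (hd : ∀ c ∈ Ioo a b, ∃ d < 0,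
      HasDerivWithinAt g d (Iio c) c ∨ HasDerivWithinAt g d (Ioi c) c) :
    AntitoneOn g (Icc a b) := by
  intro x hx y hy hxy
  by_contra! hlt
  have hlevels : Ioo (g x) (g y) ⊆ g '' {c | IsStrictLocalMin g c} := by
    intro v hv
    obtain ⟨c, hc, rfl, hright⟩ :=
      exists_mem_Ioo_eq_and_forall_Ioc_lt hxy (hg.mono (Icc_subset_Icc hx.1 hy.2)) hv
    have hgt : ∀ᶠ t in 𝓝[>] c, g c < g t := by
      filter_upwards [Ioo_mem_nhdsGT hc.2] with t ht using hright t (Ioo_subset_Ioc_self ht)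
    obtain ⟨d, hd0, hleft | hright'⟩ := hd c ⟨hx.1.trans_lt hc.1, hc.2.trans_le hy.2⟩
    · refine ⟨c, ?_, rfl⟩
      show ∀ᶠ t in 𝓝[≠] c, g c < g t
      rw [← nhdsLT_sup_nhdsGT, eventually_sup]
      exact ⟨hleft.eventually_nhdsLT_lt_of_neg hd0, hgt⟩
    · obtain ⟨t, hlt, hgt⟩ := ((hright'.eventually_nhdsGT_lt_of_neg hd0).and hgt).exists
      exact absurd hlt hgt.not_gt
  have hcount := ((countable_setOf_isStrictLocalMin g).image g).mono hlevels
  exact (Cardinal.Real.Ioo_countable_iff.1 hcount).not_gt hlt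

theorem antitoneOn_of_one_sided_hasDerivWithinAt_nonpos {g : ℝ → ℝ} {a b : ℝ}
    (hg : ContinuousOn g (Icc a b))
    (hd : ∀ c ∈ Ioo a b, ∃ d ≤ 0,
      HasDerivWithinAt g d (Iio c) c ∨ HasDerivWithinAt g d (Ioi c) c) :
    AntitoneOn g (Icc a b) := by
  intro x hx y hy hxy
  have htilt : ∀ ε > 0, g y - ε * y ≤ g x - ε * x := by
    intro ε hε
    refine antitoneOn_of_one_sided_hasDerivWithinAt_neg (g := fun t => g t - ε * t)
      (hg.sub (continuousOn_const.mul continuousOn_id)) (fun c hc => ?_) hx hy hxy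
    obtain ⟨d, hd0, hdc⟩ := hd c hc
    refine ⟨d - ε * 1, by linarith, ?_⟩
    exact hdc.imp (fun h => h.sub ((hasDerivWithinAt_id c _).const_mul ε))
      (fun h => h.sub ((hasDerivWithinAt_id c _).const_mul ε))
  have hlim : Tendsto (fun ε : ℝ => g x + ε * (y - x)) (𝓝[>] 0) (𝓝 (g x)) := by
    refine tendsto_nhdsWithin_of_tendsto_nhds ?_
    simpa using ((continuous_id.mul continuous_const).const_add (g x)).tendsto (0 : ℝ)
  exact ge_of_tendsto hlim (eventually_nhdsWithin_of_forall fun ε hε => by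
    linarith [htilt ε hε])

theorem constant_of_one_sided_deriv_zero_general
    (f : ℝ → ℝ) (a b : ℝ)
    (hf : ContinuousOn f (Set.Icc a b))
    (h : ∀ x ∈ Set.Ioo a b,
      HasDerivWithinAt f 0 (Set.Iio x) x ∨ HasDerivWithinAt f 0 (Set.Ioi x) x) :
    ∀ x ∈ Set.Icc a b, ∀ y ∈ Set.Icc a b, f x = f y := by
  have hanti : AntitoneOn f (Icc a b) :=
    antitoneOn_of_one_sided_hasDerivWithinAt_nonpos hf fun c hc => ⟨0, le_rfl, h c hc⟩
  have hmono : MonotoneOn f (Icc a b) := by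
    have hneg : AntitoneOn (-f) (Icc a b) :=
      antitoneOn_of_one_sided_hasDerivWithinAt_nonpos hf.neg fun c hc =>
        ⟨0, le_rfl, by simpa using (h c hc).imp HasDerivWithinAt.neg HasDerivWithinAt.neg⟩
    exact fun x hx y hy hxy => neg_le_neg_iff.1 (hneg hx hy hxy)
  intro x hx y hy
  rcases le_total x y with hxy | hyx
  · exact le_antisymm (hmono hx hy hxy) (hanti hx hy hxy)
  · exact le_antisymm (hanti hy hx hyx) (hmono hy hx hyx)

/-- A continuous function on [a,b] whose left or right derivative
vanishes at each interior point is constant. -/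
theorem constant_of_one_sided_deriv_zero
    (f : ℝ → ℝ) (a b : ℝ) (hab : a ≤ b)
    (hf : ContinuousOn f (Set.Icc a b))
    (h : ∀ x ∈ Set.Ioo a b,
      HasDerivWithinAt f 0 (Set.Iio x) x ∨ HasDerivWithinAt f 0 (Set.Ioi x) x) :
    ∀ x ∈ Set.Icc a b, ∀ y ∈ Set.Icc a b, f x = f y :=
  constant_of_one_sided_deriv_zero_general f a b hf h
end

section
/- Let (U(t,s))_{t≥s} be an evolution family on a separable Hilbert space H and (μ_{t,s})_{t≥s} a family of probability measures on H. Define the operators p_{s,t}f(x) = ∫_H f(U(t,s)x + y) μ_{t,s}(dy) for bounded measurable f. Then the Chapman–Kolmogorov equations p_{s,r}p_{r,t} = p_{s,t} hold on B_b(H) for all s ≤ r ≤ t if and only if μ_{t,s} = μ_{t,r} * (μ_{r,s} ∘ U(t,r)^{-1}) for all s ≤ r ≤ t. -/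
/-!
Since `U(t,r) U(r,s) = U(t,s)`, the composite `p_{s,r} p_{r,t} f (x)` is the integral of
`f (U(t,s) x + ·)` against `μ_{t,r} * (μ_{r,s} ∘ U(t,r)⁻¹)`, while `p_{s,t} f (x)` is its integral
against `μ_{t,s}`. The skew convolution equation therefore gives Chapman–Kolmogorov at once;
conversely, at `x = 0` Chapman–Kolmogorov says that both measures integrate every bounded
continuous function alike, and such integrals determine a finite Borel measure.
-/

open MeasureTheory

variable {H : Type*} [NormedAddCommGroup H] [InnerProductSpace ℝ H] [CompleteSpace H]
  [SecondCountableTopology H] [MeasurableSpace H] [BorelSpace H]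

/-- Convolution of two measures on `H`. -/
noncomputable def mconv (μ ν : Measure H) : Measure H :=
  (μ.prod ν).map (fun p : H × H => p.1 + p.2)

/-- The (non-time-homogeneous generalized Mehler) transition operator
`p_{s,t} f (x) = ∫ f (U(t,s) x + y) μ_{t,s}(dy)`. -/
noncomputable def pst (U : ℝ → ℝ → H →L[ℝ] H) (μ : ℝ → ℝ → Measure H)
    (s t : ℝ) (f : H → ℝ) (x : H) : ℝ :=
  ∫ y, f (U t s x + y) ∂(μ t s)

theorem integral_conv_map {E F : Type*} [AddCommMonoid E] [MeasurableSpace E]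
    [MeasurableAdd₂ E] [MeasurableSpace F] {ν : Measure E} {ρ : Measure F} [SFinite ν]
    [SFinite ρ] {T : F → E} (hT : Measurable T) {g : E → ℝ}
    (hg : Integrable g (ν ∗ ρ.map T)) :
    ∫ w, g w ∂(ν ∗ ρ.map T) = ∫ y, ∫ z, g (T y + z) ∂ν ∂ρ := by
  rw [Measure.conv_comm] at hg ⊢
  have hprod : Integrable (fun p : E × E => g (p.1 + p.2)) ((ρ.map T).prod ν) :=
    (integrable_map_measure hg.1 (by fun_prop)).mp hg
  rw [integral_conv hg,
    integral_map hT.aemeasurable hprod.integral_prod_left.aestronglyMeasurable]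

theorem integrable_of_abs_le {α : Type*} [MeasurableSpace α] {μ : Measure α}
    [IsFiniteMeasure μ] {g : α → ℝ} (hg : Measurable g) {C : ℝ} (hC : ∀ x, |g x| ≤ C) :
    Integrable g μ :=
  .of_bound hg.aestronglyMeasurable C (.of_forall hC)

omit [CompleteSpace H] in
theorem pst_pst_eq_integral_mconv (U : ℝ → ℝ → H →L[ℝ] H) (μ : ℝ → ℝ → Measure H)
    {s r t : ℝ} (hComp : (U t r).comp (U r s) = U t s)
    [IsFiniteMeasure (μ t r)] [IsFiniteMeasure (μ r s)] {f : H → ℝ} (hf : Measurable f)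
    {C : ℝ} (hC : ∀ x, |f x| ≤ C) (x : H) :
    pst U μ s r (pst U μ r t f) x
      = ∫ w, f (U t s x + w) ∂(mconv (μ t r) ((μ r s).map (U t r))) := by
  have h := integral_conv_map (U t r).measurable
    (integrable_of_abs_le (μ := μ t r ∗ (μ r s).map (U t r)) (g := fun w => f (U t s x + w))
      (hf.comp (measurable_const_add _)) fun w => hC _)
  simp only [pst, ← hComp, ContinuousLinearMap.comp_apply, map_add, add_assoc] at h ⊢
  exact h.symm

theorem chapman_kolmogorov_iff_skew_convolution_general
    (U : ℝ → ℝ → H →L[ℝ] H) (μ : ℝ → ℝ → Measure H)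
    (hprob : ∀ t s : ℝ, IsProbabilityMeasure (μ t s))
    (hComp : ∀ t r s : ℝ, s ≤ r → r ≤ t → (U t r).comp (U r s) = U t s) :
    (∀ s r t : ℝ, s ≤ r → r ≤ t → ∀ f : H → ℝ, Measurable f → (∃ C, ∀ x, |f x| ≤ C) →
        ∀ x, pst U μ s r (pst U μ r t f) x = pst U μ s t f x)
    ↔ (∀ s r t : ℝ, s ≤ r → r ≤ t → μ t s = mconv (μ t r) ((μ r s).map (U t r))) := by
  constructor
  · intro hCK s r t hsr hrt
    have := hprob t s; have := hprob t r; have := hprob r s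
    -- `mconv` is `Measure.conv` unfolded
    show μ t s = μ t r ∗ (μ r s).map (U t r)
    refine ext_of_forall_integral_eq_of_IsFiniteMeasure fun f => ?_
    have hf := hCK s r t hsr hrt f f.continuous.measurable ⟨‖f‖, f.norm_coe_le_norm⟩ 0
    rw [pst_pst_eq_integral_mconv U μ (hComp t r s hsr hrt) f.continuous.measurable
      f.norm_coe_le_norm] at hf
    simp only [pst, map_zero, zero_add] at hf
    exact hf.symm
  · rintro hconv s r t hsr hrt f hf ⟨C, hC⟩ x
    have := hprob t r; have := hprob r s
    rw [pst_pst_eq_integral_mconv U μ (hComp t r s hsr hrt) hf hC, ← hconv s r t hsr hrt, pst]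

/-- the Chapman–Kolmogorov equations for `p_{s,t}` hold iff the
skew convolution equations `μ_{t,s} = μ_{t,r} * (μ_{r,s} ∘ U(t,r)⁻¹)` hold. -/
theorem chapman_kolmogorov_iff_skew_convolution
    (U : ℝ → ℝ → H →L[ℝ] H) (μ : ℝ → ℝ → Measure H)
    (hprob : ∀ t s : ℝ, IsProbabilityMeasure (μ t s))
    (hId : ∀ s : ℝ, U s s = ContinuousLinearMap.id ℝ H)
    (hComp : ∀ t r s : ℝ, s ≤ r → r ≤ t → (U t r).comp (U r s) = U t s)
    (hCont : ∀ x : H, ContinuousOn (fun p : ℝ × ℝ => U p.1 p.2 x) {p : ℝ × ℝ | p.2 ≤ p.1}) :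
    (∀ s r t : ℝ, s ≤ r → r ≤ t → ∀ f : H → ℝ, Measurable f → (∃ C, ∀ x, |f x| ≤ C) →
        ∀ x, pst U μ s r (pst U μ r t f) x = pst U μ s t f x)
    ↔ (∀ s r t : ℝ, s ≤ r → r ≤ t → μ t s = mconv (μ t r) ((μ r s).map (U t r))) :=
  chapman_kolmogorov_iff_skew_convolution_general U μ hprob hComp
end

section
/- Let ψ_{t,s}(ξ) = −log μ̂_{t,s}(ξ) where (μ_{t,s})_{t≥s} satisfies ψ_{t,s}(ξ) = ψ_{t,r}(ξ) + ψ_{r,s}(U(t,r)*ξ) for t ≥ r ≥ s. Suppose for every ξ ∈ H and t: (1) s ↦ ψ_{t,s}(ξ) is continuous on (−∞,t] and left differentiable at s = t, with left derivative −λ_t(ξ); (2) s ↦ λ_s(U(t,s)*ξ) is continuous. Then for every ξ ∈ H and t ≥ s, μ̂_{t,s}(ξ) = exp(−∫_s^t λ_r(U(t,r)*ξ) dr). -/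
/-!
By the cocycle identity, near `r ≤ t` the function `s ↦ ψ t s ξ` is `ψ t r ξ` plus
`s ↦ ψ r s (U(t,r)* ξ)`, so its left derivative at `r` is `-λ_r(U(t,r)* ξ)`. Hence
`s ↦ ψ t s ξ - ∫_s^t λ_r(U(t,r)* ξ) dr` has vanishing left derivative on `(-∞, t]`, is therefore
constant, and vanishes at `s = t`.
-/

open MeasureTheory RealInnerProductSpace

variable {H : Type*} [NormedAddCommGroup H] [InnerProductSpace ℝ H] [CompleteSpace H]
  [SecondCountableTopology H] [MeasurableSpace H] [BorelSpace H]

noncomputable def charFn (μ : Measure H) (ξ : H) : ℂ :=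
  ∫ x, Complex.exp (Complex.I * (⟪x, ξ⟫ : ℝ)) ∂μ

open Set

section LeftDerivative
variable {E : Type*} [NormedAddCommGroup E] [NormedSpace ℝ E]

theorem constant_of_has_deriv_left_zero {f : ℝ → E} {a b : ℝ} (hcont : ContinuousOn f (Icc a b))
    (hderiv : ∀ x ∈ Ioc a b, HasDerivWithinAt f 0 (Iic x) x) : ∀ x ∈ Icc a b, f x = f b := by
  have hmaps : MapsTo Neg.neg (Icc (-b) (-a)) (Icc a b) := fun x hx =>
    ⟨le_neg_of_le_neg hx.2, neg_le_of_neg_le hx.1⟩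
  have hreflect : ∀ x ∈ Icc (-b) (-a), f (-x) = f (-(-b)) :=
    constant_of_has_deriv_right_zero (hcont.comp continuousOn_neg hmaps) fun x hx => by
      have hderiv' := (hderiv (-x) ⟨lt_neg_of_lt_neg hx.2, neg_le_of_neg_le hx.1⟩).scomp x
        (hasDerivAt_neg x).hasDerivWithinAt fun _ hy => neg_le_neg (mem_Ici.mp hy)
      rwa [smul_zero] at hderiv'
  intro x hx
  simpa only [neg_neg] using hreflect (-x) ⟨neg_le_neg hx.2, neg_le_neg hx.1⟩

theorem ContinuousOn.hasDerivWithinAt_Iic_integral_left {g : ℝ → E} [CompleteSpace E] {r t : ℝ}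
    (hg : ContinuousOn g (Iic t)) (hrt : r ≤ t) :
    HasDerivWithinAt (fun x => ∫ u in x..t, g u) (-g r) (Iic r) r := by
  have hg' : ContinuousOn g (Iic r) := hg.mono (Iic_subset_Iic.mpr hrt)
  refine intervalIntegral.integral_hasDerivWithinAt_left ?_
    (hg'.stronglyMeasurableAtFilter_nhdsWithin measurableSet_Iic r) (hg' r self_mem_Iic)
  exact (hg.mono (by rw [uIcc_of_le hrt]; exact Icc_subset_Iic_self)).intervalIntegrable

theorem ContinuousOn.continuousOn_integral_left {g : ℝ → E} [CompleteSpace E] {s t : ℝ}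
    (hg : ContinuousOn g (Iic t)) (hst : s ≤ t) :
    ContinuousOn (fun x => ∫ u in x..t, g u) (Icc s t) := by
  rw [← uIcc_of_le hst]
  refine intervalIntegral.continuousOn_primitive_interval_left ?_
  exact (hg.mono (by rw [uIcc_of_le hst]; exact Icc_subset_Iic_self)).integrableOn_compact
    isCompact_uIcc

end LeftDerivative

section Cocycle
variable {X E : Type*} [NormedAddCommGroup E] [NormedSpace ℝ E]
  {A : ℝ → ℝ → X → X} {ψ : ℝ → ℝ → X → E} {lam : ℝ → X → E}

theorem hasDerivWithinAt_Iic_of_cocycle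
    (hcoc : ∀ t r s : ℝ, s ≤ r → r ≤ t → ∀ ξ, ψ t s ξ = ψ t r ξ + ψ r s (A t r ξ))
    (hderiv : ∀ t ξ, HasDerivWithinAt (fun s => ψ t s ξ) (-lam t ξ) (Iio t) t)
    {r t : ℝ} (hrt : r ≤ t) (ξ : X) :
    HasDerivWithinAt (fun s => ψ t s ξ) (-lam r (A t r ξ)) (Iic r) r :=
  ((hderiv r (A t r ξ)).const_add (ψ t r ξ)).Iic_of_Iio.congr
    (fun _ hs => hcoc t r _ hs hrt ξ) (hcoc t r r le_rfl hrt ξ)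

theorem eq_integral_of_cocycle [CompleteSpace E] (hA : ∀ r ξ, A r r ξ = ξ)
    (hcoc : ∀ t r s : ℝ, s ≤ r → r ≤ t → ∀ ξ, ψ t s ξ = ψ t r ξ + ψ r s (A t r ξ))
    (hderiv : ∀ t ξ, HasDerivWithinAt (fun s => ψ t s ξ) (-lam t ξ) (Iio t) t)
    {t : ℝ} {ξ : X} (hcont : ContinuousOn (fun s => ψ t s ξ) (Iic t))
    (hlamcont : ContinuousOn (fun s => lam s (A t s ξ)) (Iic t)) {s : ℝ} (hst : s ≤ t) :
    ψ t s ξ = ∫ r in s..t, lam r (A t r ξ) := by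
  have hdiag : ψ t t ξ = 0 := by
    simpa [hA] using hcoc t t t le_rfl le_rfl ξ
  set Φ : ℝ → E := fun x => ψ t x ξ - ∫ r in x..t, lam r (A t r ξ)
  have hΦ_const : ∀ x ∈ Icc s t, Φ x = Φ t :=
    constant_of_has_deriv_left_zero
      ((hcont.mono Icc_subset_Iic_self).sub (hlamcont.continuousOn_integral_left hst))
      fun r hr => by
        have hΦ' := (hasDerivWithinAt_Iic_of_cocycle hcoc hderiv hr.2 ξ).sub
          (hlamcont.hasDerivWithinAt_Iic_integral_left hr.2)
        rwa [sub_neg_eq_add, neg_add_cancel] at hΦ'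
  simpa [Φ, hdiag, sub_eq_zero] using hΦ_const s ⟨le_rfl, hst⟩

end Cocycle

theorem char_integral_representation_general
    (U : ℝ → ℝ → H →L[ℝ] H)
    (hId : ∀ s : ℝ, U s s = ContinuousLinearMap.id ℝ H)
    (μ : ℝ → ℝ → Measure H)
    (ψ : ℝ → ℝ → H → ℂ) (lam : ℝ → H → ℂ)
    (hψ : ∀ t s : ℝ, s ≤ t → ∀ ξ : H, charFn (μ t s) ξ = Complex.exp (-(ψ t s ξ)))
    (hcoc : ∀ t r s : ℝ, s ≤ r → r ≤ t → ∀ ξ : H,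
      ψ t s ξ = ψ t r ξ + ψ r s (ContinuousLinearMap.adjoint (U t r) ξ))
    (hcont : ∀ (t : ℝ) (ξ : H), ContinuousOn (fun s => ψ t s ξ) (Set.Iic t))
    (hderiv : ∀ (t : ℝ) (ξ : H),
      HasDerivWithinAt (fun s => ψ t s ξ) (-(lam t ξ)) (Set.Iio t) t)
    (hlamcont : ∀ (t : ℝ) (ξ : H),
      ContinuousOn (fun s => lam s (ContinuousLinearMap.adjoint (U t s) ξ)) (Set.Iic t)) :
    ∀ t s : ℝ, s ≤ t → ∀ ξ : H,
      charFn (μ t s) ξ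
        = Complex.exp (-∫ r in s..t, lam r (ContinuousLinearMap.adjoint (U t r) ξ)) := by
  intro t s hst ξ
  have hadjoint_diag : ∀ r (η : H), ContinuousLinearMap.adjoint (U r r) η = η := fun r η => by
    rw [hId, ContinuousLinearMap.adjoint_id, ContinuousLinearMap.id_apply]
  rw [hψ t s hst ξ, eq_integral_of_cocycle (A := fun t r => ContinuousLinearMap.adjoint (U t r))
    hadjoint_diag hcoc hderiv (hcont t ξ) (hlamcont t ξ) hst]

/-- if `ψ_{t,s} = -log μ̂_{t,s}` satisfies the cocycle identity, is
continuous and left differentiable at `s = t` with left derivative `-λ_t`, and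
`s ↦ λ_s(U(t,s)*ξ)` is continuous, then
`μ̂_{t,s}(ξ) = exp(-∫_s^t λ_r(U(t,r)*ξ) dr)`. -/
theorem char_integral_representation
    (U : ℝ → ℝ → H →L[ℝ] H)
    (hId : ∀ s : ℝ, U s s = ContinuousLinearMap.id ℝ H)
    (hComp : ∀ t r s : ℝ, s ≤ r → r ≤ t → (U t r).comp (U r s) = U t s)
    (hCont : ∀ x : H, ContinuousOn (fun p : ℝ × ℝ => U p.1 p.2 x) {p : ℝ × ℝ | p.2 ≤ p.1})
    (μ : ℝ → ℝ → Measure H) (hprob : ∀ t s : ℝ, IsProbabilityMeasure (μ t s))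
    (ψ : ℝ → ℝ → H → ℂ) (lam : ℝ → H → ℂ)
    (hψ : ∀ t s : ℝ, s ≤ t → ∀ ξ : H, charFn (μ t s) ξ = Complex.exp (-(ψ t s ξ)))
    (hcoc : ∀ t r s : ℝ, s ≤ r → r ≤ t → ∀ ξ : H,
      ψ t s ξ = ψ t r ξ + ψ r s (ContinuousLinearMap.adjoint (U t r) ξ))
    (hcont : ∀ (t : ℝ) (ξ : H), ContinuousOn (fun s => ψ t s ξ) (Set.Iic t))
    (hderiv : ∀ (t : ℝ) (ξ : H),
      HasDerivWithinAt (fun s => ψ t s ξ) (-(lam t ξ)) (Set.Iio t) t)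
    (hlamcont : ∀ (t : ℝ) (ξ : H),
      ContinuousOn (fun s => lam s (ContinuousLinearMap.adjoint (U t s) ξ)) (Set.Iic t)) :
    ∀ t s : ℝ, s ≤ t → ∀ ξ : H,
      charFn (μ t s) ξ
        = Complex.exp (-∫ r in s..t, lam r (ContinuousLinearMap.adjoint (U t r) ξ)) :=
  char_integral_representation_general U hId μ ψ lam hψ hcoc hcont hderiv hlamcont
end

section
/- Let (ν_t^{(1)})_{t∈ℝ} be an evolution system of measures for the non-homogeneous generalized Mehler semigroup (p_{s,t}). Suppose (σ_t)_{t∈ℝ} is a family of probability measures with σ_s ∘ U(t,s)^{-1} = σ_t for all t ≥ s, and define ν_t^{(2)} := ν_t^{(1)} * σ_t. Then (ν_t^{(2)})_{t∈ℝ} is also an evolution system of measures for (p_{s,t}). -/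
open MeasureTheory

variable {H : Type*} [NormedAddCommGroup H] [InnerProductSpace ℝ H] [CompleteSpace H]
  [SecondCountableTopology H] [MeasurableSpace H] [BorelSpace H]

lemma integrable_of_bdd {α : Type*} [MeasurableSpace α] (m : Measure α) [IsFiniteMeasure m]
    {f : α → ℝ} (hf : AEStronglyMeasurable f m) {C : ℝ} (hC : ∀ x, |f x| ≤ C) :
    Integrable f m :=
  (integrable_const C).mono' hf (Filter.Eventually.of_forall fun x => by
    simpa [Real.norm_eq_abs] using hC x)

lemma integral_mconv (μ ν : Measure H) [IsProbabilityMeasure μ] [IsProbabilityMeasure ν]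
    {f : H → ℝ} (hf : Measurable f) {C : ℝ} (hC : ∀ x, |f x| ≤ C) :
    ∫ x, f x ∂(mconv μ ν) = ∫ x, ∫ y, f (x + y) ∂ν ∂μ := by
  rw [mconv, integral_map (by fun_prop) hf.aestronglyMeasurable]
  exact integral_prod _ (integrable_of_bdd _
    ((hf.comp (by fun_prop : Measurable fun p : H × H => p.1 + p.2)).aestronglyMeasurable)
    (fun p => hC _))

/-- if `(ν¹_t)` is an evolution system of measures and `(σ_t)` satisfies
`σ_s ∘ U(t,s)⁻¹ = σ_t`, then `ν²_t := ν¹_t * σ_t` is also an evolution system of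
measures for `(p_{s,t})`. -/
theorem evolution_system_convolution
    (U : ℝ → ℝ → H →L[ℝ] H) (μ : ℝ → ℝ → Measure H)
    (hprob : ∀ t s : ℝ, IsProbabilityMeasure (μ t s))
    (hId : ∀ s : ℝ, U s s = ContinuousLinearMap.id ℝ H)
    (hComp : ∀ t r s : ℝ, s ≤ r → r ≤ t → (U t r).comp (U r s) = U t s)
    (hCont : ∀ x : H, ContinuousOn (fun p : ℝ × ℝ => U p.1 p.2 x) {p : ℝ × ℝ | p.2 ≤ p.1})
    (hskew : ∀ s r t : ℝ, s ≤ r → r ≤ t → μ t s = mconv (μ t r) ((μ r s).map (U t r)))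
    (ν₁ σ : ℝ → Measure H)
    (hν₁ : ∀ t : ℝ, IsProbabilityMeasure (ν₁ t)) (hσ : ∀ t : ℝ, IsProbabilityMeasure (σ t))
    (hES : ∀ s t : ℝ, s ≤ t → ∀ f : H → ℝ, Measurable f → (∃ C, ∀ x, |f x| ≤ C) →
      ∫ x, pst U μ s t f x ∂(ν₁ s) = ∫ x, f x ∂(ν₁ t))
    (hσU : ∀ s t : ℝ, s ≤ t → (σ s).map (U t s) = σ t) :
    ∀ s t : ℝ, s ≤ t → ∀ f : H → ℝ, Measurable f → (∃ C, ∀ x, |f x| ≤ C) →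
      ∫ x, pst U μ s t f x ∂(mconv (ν₁ s) (σ s)) = ∫ x, f x ∂(mconv (ν₁ t) (σ t)) := by
  rintro s t hst f hf ⟨C, hC⟩
  haveI := hprob t s
  haveI := hν₁ s; haveI := hν₁ t; haveI := hσ s; haveI := hσ t
  -- measurability of pst
  have hpstm : StronglyMeasurable (pst U μ s t f) := by
    have h1 : StronglyMeasurable (fun p : H × H => f (U t s p.1 + p.2)) :=
      (hf.comp (by fun_prop)).stronglyMeasurable
    exact h1.integral_prod_right'
  -- boundedness of pst
  have hC0 : 0 ≤ C := le_trans (abs_nonneg _) (hC 0)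
  have hpstb : ∀ x, |pst U μ s t f x| ≤ C := by
    intro x
    have : ‖∫ y, f (U t s x + y) ∂(μ t s)‖ ≤ C * ((μ t s) Set.univ).toReal :=
      norm_integral_le_of_norm_le_const (Filter.Eventually.of_forall fun y => by
        simpa [Real.norm_eq_abs] using hC _)
    simpa [pst, Real.norm_eq_abs] using this
  rw [integral_mconv (ν₁ s) (σ s) hpstm.measurable hpstb,
      integral_mconv (ν₁ t) (σ t) hf hC]
  -- swap order of integration on the left
  have hadd : Measurable fun p : H × H => pst U μ s t f (p.1 + p.2) :=
    hpstm.measurable.comp (by fun_prop)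
  rw [integral_integral_swap (integrable_of_bdd _ hadd.aestronglyMeasurable fun p => hpstb _)]
  have key : ∀ z, ∫ x, pst U μ s t f (x + z) ∂(ν₁ s) = ∫ w, f (w + U t s z) ∂(ν₁ t) := by
    intro z
    have hg : Measurable fun w => f (w + U t s z) := hf.comp (by fun_prop)
    rw [← hES s t hst _ hg ⟨C, fun x => hC _⟩]
    refine integral_congr_ae (Filter.Eventually.of_forall fun x => ?_)
    simp only [pst, map_add]
    refine integral_congr_ae (Filter.Eventually.of_forall fun y => ?_)
    congr 1
    abel
  calc ∫ z, ∫ x, pst U μ s t f (x + z) ∂(ν₁ s) ∂(σ s)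
      = ∫ z, ∫ w, f (w + U t s z) ∂(ν₁ t) ∂(σ s) :=
        integral_congr_ae (Filter.Eventually.of_forall key)
    _ = ∫ z, ∫ w, f (w + z) ∂(ν₁ t) ∂((σ s).map (U t s)) := by
        rw [integral_map (by fun_prop)]
        exact ((hf.comp (by fun_prop : Measurable fun p : H × H =>
          p.2 + p.1)).stronglyMeasurable.integral_prod_right').aestronglyMeasurable
    _ = ∫ z, ∫ w, f (w + z) ∂(ν₁ t) ∂(σ t) := by rw [hσU s t hst]
    _ = ∫ w, ∫ z, f (w + z) ∂(σ t) ∂(ν₁ t) := by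
        exact integral_integral_swap (integrable_of_bdd _
          ((hf.comp (by fun_prop : Measurable fun p : H × H =>
            p.2 + p.1)).aestronglyMeasurable) fun p => hC _)
end

section
/- Let p_{s,t} = p^g_{s,t} p^j_{s,t} be the decomposition of a non-homogeneous generalized Mehler semigroup into its Gaussian part p^g_{s,t} (with covariance R_{t,s} and drift operator U(t,s)) and jump part p^j_{s,t} (a convolution operator). Suppose the Gaussian part satisfies the Harnack inequality (p^g_{s,t}f(x))^α ≤ exp(α|Γ_{t,s}(x−y)|²/(2(α−1))) p^g_{s,t}f^α(y) with Γ_{t,s} = R_{t,s}^{-1/2}U(t,s). Then the full semigroup satisfies (p_{s,t}f(x))^α ≤ exp(α|Γ_{t,s}(x−y)|²/(2(α−1))) p_{s,t}f^α(y) for all α > 1, bounded nonnegative measurable f, and x,y ∈ H. -/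
/-!
Write the integral against `mconv μg μj` as an iterated integral, `μj` outside. For each jump `b`
the inner integral is the Gaussian part applied to the translate `f (· + b)`, so the Gaussian
Harnack inequality holds pointwise in `b`; Jensen's inequality for `t ↦ t ^ α` under the
probability measure `μj` then moves the power inside the outer integral.
-/

open MeasureTheory

variable {H : Type*} [NormedAddCommGroup H] [InnerProductSpace ℝ H] [CompleteSpace H]
  [SecondCountableTopology H] [MeasurableSpace H] [BorelSpace H]

theorem rpow_integral_le_integral_rpow {Ω : Type*} [MeasurableSpace Ω] {μ : Measure Ω}
    [IsProbabilityMeasure μ] {g : Ω → ℝ} {p : ℝ} (hp : 1 ≤ p) (hg0 : 0 ≤ᵐ[μ] g)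
    (hg : Integrable g μ) (hgp : Integrable (fun x => g x ^ p) μ) :
    (∫ x, g x ∂μ) ^ p ≤ ∫ x, g x ^ p ∂μ :=
  (convexOn_rpow hp).map_integral_le
    (continuousOn_id.rpow_const fun _ _ => Or.inr (zero_le_one.trans hp)) isClosed_Ici hg0 hg hgp

set_option linter.unusedSectionVars false

section mconv

variable {μ ν : Measure H}

instance [IsFiniteMeasure μ] [IsFiniteMeasure ν] : IsFiniteMeasure (mconv μ ν) := by
  unfold mconv; infer_instance

variable {E : Type*} [NormedAddCommGroup E] {g : H → E}

theorem integrable_comp_add_prod_of_integrable_mconv (hg : Integrable g (mconv μ ν)) :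
    Integrable (fun p : H × H => g (p.1 + p.2)) (μ.prod ν) :=
  (integrable_map_measure hg.aestronglyMeasurable measurable_add.aemeasurable).1 hg

variable [NormedSpace ℝ E] [SFinite μ] [SFinite ν]

theorem integrable_integral_comp_add_of_integrable_mconv (hg : Integrable g (mconv μ ν)) :
    Integrable (fun b => ∫ a, g (a + b) ∂μ) ν :=
  (integrable_comp_add_prod_of_integrable_mconv hg).integral_prod_right

theorem integral_mconv_s16 (hg : Integrable g (mconv μ ν)) :
    ∫ z, g z ∂(mconv μ ν) = ∫ b, ∫ a, g (a + b) ∂μ ∂ν := by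
  rw [mconv, integral_map measurable_add.aemeasurable hg.aestronglyMeasurable]
  exact integral_prod_symm _ (integrable_comp_add_prod_of_integrable_mconv hg)

end mconv

def HarnackIneq {G : Type*} [Add G] [MeasurableSpace G] (μ : Measure G) (p K : ℝ) (u v : G) :
    Prop :=
  ∀ f : G → ℝ, Measurable f → (∀ z, 0 ≤ f z) → (∃ C, ∀ z, f z ≤ C) →
    (∫ z, f (u + z) ∂μ) ^ p ≤ K * ∫ z, f (v + z) ^ p ∂μ

theorem HarnackIneq.mconv_right {μ ν : Measure H} [IsFiniteMeasure μ] [IsProbabilityMeasure ν]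
    {p K : ℝ} {u v : H} (hp : 1 ≤ p) (h : HarnackIneq μ p K u v) :
    HarnackIneq (mconv μ ν) p K u v := by
  intro f hf hf0 ⟨C, hC⟩
  have hint : ∀ w, Integrable (fun z => f (w + z)) (mconv μ ν) := fun w =>
    .of_bound (hf.comp (measurable_const_add w)).aestronglyMeasurable C
      (ae_of_all _ fun z => by rw [Real.norm_of_nonneg (hf0 _)]; exact hC _)
  have hint_rpow : ∀ w, Integrable (fun z => f (w + z) ^ p) (mconv μ ν) := fun w =>
    .of_bound ((hf.comp (measurable_const_add w)).pow_const p).aestronglyMeasurable (C ^ p)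
      (ae_of_all _ fun z => by
        rw [Real.norm_of_nonneg (Real.rpow_nonneg (hf0 _) p)]
        exact Real.rpow_le_rpow (hf0 _) (hC _) (zero_le_one.trans hp))
  set G := fun b => ∫ a, f (u + (a + b)) ∂μ
  set Gp := fun b => ∫ a, f (v + (a + b)) ^ p ∂μ
  have hG : Integrable G ν := integrable_integral_comp_add_of_integrable_mconv (hint u)
  have hGp : Integrable Gp ν := integrable_integral_comp_add_of_integrable_mconv (hint_rpow v)
  have hG0 : ∀ b, 0 ≤ G b := fun b => integral_nonneg fun a => hf0 _
  have hG_rpow_le : ∀ b, G b ^ p ≤ K * Gp b := fun b => by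
    simpa only [add_assoc] using
      h (fun z => f (z + b)) (hf.comp (measurable_add_const b)) (fun _ => hf0 _) ⟨C, fun _ => hC _⟩
  have hG_rpow : Integrable (fun b => G b ^ p) ν :=
    (hGp.const_mul K).mono' (hG.aestronglyMeasurable.aemeasurable.pow_const p).aestronglyMeasurable
      (ae_of_all _ fun b => by
        rw [Real.norm_of_nonneg (Real.rpow_nonneg (hG0 b) p)]
        exact hG_rpow_le b)
  calc (∫ z, f (u + z) ∂mconv μ ν) ^ p = (∫ b, G b ∂ν) ^ p := by rw [integral_mconv_s16 (hint u)]
    _ ≤ ∫ b, G b ^ p ∂ν := rpow_integral_le_integral_rpow hp (ae_of_all _ hG0) hG hG_rpow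
    _ ≤ ∫ b, K * Gp b ∂ν := integral_mono hG_rpow (hGp.const_mul K) hG_rpow_le
    _ = K * ∫ z, f (v + z) ^ p ∂mconv μ ν := by rw [integral_const_mul, integral_mconv_s16 (hint_rpow v)]

/-- if the Gaussian part `pᵍ_{s,t}` of the generalized Mehler semigroup
satisfies the Harnack inequality with exponent `α|Γ_{t,s}(x-y)|²/(2(α-1))`, then so does
the full semigroup `p_{s,t} = pᵍ_{s,t} pʲ_{s,t}` (with `μ_{t,s} = μᵍ_{t,s} * μʲ_{t,s}`). -/
theorem harnack_transfer
    (μg μj : Measure H) [IsProbabilityMeasure μg] [IsProbabilityMeasure μj]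
    (U : H →L[ℝ] H) (Γ : H → H)
    (hHg : ∀ α : ℝ, 1 < α → ∀ f : H → ℝ, Measurable f → (∀ z, 0 ≤ f z) →
      (∃ C, ∀ z, f z ≤ C) → ∀ x y : H,
      (∫ z, f (U x + z) ∂μg) ^ α
        ≤ Real.exp (α * ‖Γ (x - y)‖ ^ 2 / (2 * (α - 1))) * ∫ z, (f (U y + z)) ^ α ∂μg) :
    ∀ α : ℝ, 1 < α → ∀ f : H → ℝ, Measurable f → (∀ z, 0 ≤ f z) →
      (∃ C, ∀ z, f z ≤ C) → ∀ x y : H,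
      (∫ z, f (U x + z) ∂(mconv μg μj)) ^ α
        ≤ Real.exp (α * ‖Γ (x - y)‖ ^ 2 / (2 * (α - 1)))
            * ∫ z, (f (U y + z)) ^ α ∂(mconv μg μj) := by
  intro α hα f hf hf0 hfC x y
  exact HarnackIneq.mconv_right hα.le (fun f hf hf0 hfC => hHg α hα f hf hf0 hfC x y) f hf hf0 hfC
end

section
/- Let N(Ux, R) be the Gaussian measure on a separable Hilbert space H with mean Ux and trace-class covariance R, and define pf(x) = ∫ f dN(Ux,R). If there exists x₀ ∈ H with Ux₀ ∉ R^{1/2}(H), then p is not strong Feller; i.e., there exists a bounded measurable f such that pf is not continuous. Consequently, if p is strong Feller then U(H) ⊂ R^{1/2}(H). -/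
open MeasureTheory RealInnerProductSpace

variable {H : Type*} [NormedAddCommGroup H] [InnerProductSpace ℝ H] [CompleteSpace H]
  [SecondCountableTopology H] [MeasurableSpace H] [BorelSpace H]

/-!
If `a ∉ range Q`, then `|⟪a, h⟫| ≤ C ‖Q h‖` fails for every `C` (Douglas' lemma), so there are
`h k` with `⟪a, h k⟫ = 1` and `‖Q (h k)‖ ≤ 2⁻ᵏ`. Under the centred Gaussian `μ0` with covariance
`Q²`, the coordinate `⟪h k, z⟫` is `N(0, ‖Q (h k)‖²)`, so `∑ₖ ⟪h k, z⟫²` has finite mean and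
`⟪h k, z⟫ → 0` on a set `T` of full measure. For `z ∈ T`, `⟪h k, t • a + z⟫ → t`, so `T` is
disjoint from its translates by `t • a`, `t ≠ 0`. Taking `a = U x₀` and `f = 1_T` gives
`pf 0 = 1` but `pf (t • x₀) = 0` for every `t ≠ 0`.
-/

open ProbabilityTheory Filter Topology
open scoped ENNReal NNReal

section RangeOfSymmetric

variable {E : Type*} [NormedAddCommGroup E] [InnerProductSpace ℝ E] [CompleteSpace E]
  {Q : E →L[ℝ] E}

/-- Hahn–Banach extends `Q h ↦ ⟪a, h⟫` from `range Q` to `E`; its Riesz representative `b`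
satisfies `Q b = a`. -/
lemma mem_range_of_abs_inner_le (hQ : (Q : E →ₗ[ℝ] E).IsSymmetric) {a : E} {C : ℝ}
    (hC : ∀ h, |⟪a, h⟫| ≤ C * ‖Q h‖) : a ∈ Set.range Q := by
  set φ : E →ₗ[ℝ] ℝ := innerₛₗ ℝ a
  have hbdd : ∃ C, ∀ h, ‖φ h‖ ≤ C * ‖(Q : E →ₗ[ℝ] E) h‖ := ⟨C, hC⟩
  obtain ⟨G, hG, -⟩ := exists_extension_norm_eq (LinearMap.range (Q : E →ₗ[ℝ] E))
    (φ.compLeftInverse (Q : E →ₗ[ℝ] E))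
  refine ⟨(InnerProductSpace.toDual ℝ E).symm G, ext_inner_right ℝ fun h => ?_⟩
  refine (hQ _ h).trans ?_
  rw [InnerProductSpace.toDual_symm_apply]
  exact (hG ⟨Q h, h, rfl⟩).trans (LinearMap.compLeftInverse_apply_of_bdd _ _ hbdd h _ rfl)

lemma exists_inner_eq_one_and_norm_apply_le (hQ : (Q : E →ₗ[ℝ] E).IsSymmetric) {a : E}
    (ha : a ∉ Set.range Q) {ε : ℝ} (hε : 0 < ε) : ∃ h, ⟪a, h⟫ = 1 ∧ ‖Q h‖ ≤ ε := by
  by_contra! hlarge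
  refine ha (mem_range_of_abs_inner_le hQ (C := ε⁻¹) fun h => ?_)
  obtain hc | hc := eq_or_ne ⟪a, h⟫ 0
  · rw [hc, abs_zero]
    positivity
  · have := hlarge (⟪a, h⟫⁻¹ • h) (by rw [real_inner_smul_right, inv_mul_cancel₀ hc])
    rw [map_smul, norm_smul, norm_inv, Real.norm_eq_abs, inv_mul_eq_div,
      lt_div_iff₀ (abs_pos.2 hc)] at this
    rw [inv_mul_eq_div, le_div_iff₀ hε, mul_comm]
    exact this.le

end RangeOfSymmetric

lemma ae_tendsto_zero_of_tsum_lintegral_enorm_sq_ne_top {Ω : Type*} [MeasurableSpace Ω]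
    {μ : Measure Ω} {X : ℕ → Ω → ℝ} (hX : ∀ k, AEMeasurable (X k) μ)
    (hsum : ∑' k, ∫⁻ ω, ‖X k ω‖ₑ ^ 2 ∂μ ≠ ∞) :
    ∀ᵐ ω ∂μ, Tendsto (fun k => X k ω) atTop (𝓝 0) := by
  have hmeas : ∀ k, AEMeasurable (fun ω => ‖X k ω‖ₑ ^ 2) μ := fun k => (hX k).enorm.pow_const 2
  have hfin : ∀ᵐ ω ∂μ, ∑' k, ‖X k ω‖ₑ ^ 2 < ∞ :=
    ae_lt_top' (AEMeasurable.tsum hmeas) (by rwa [lintegral_tsum hmeas])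
  filter_upwards [hfin] with ω hω
  have hsq := ENNReal.tendsto_atTop_zero_of_tsum_ne_top hω.ne
  have hsqrt : ∀ x : ℝ≥0∞, (x ^ 2) ^ (2⁻¹ : ℝ) = x := fun x => by
    rw [← ENNReal.rpow_natCast, ← ENNReal.rpow_mul]
    norm_num
  rw [tendsto_zero_iff_enorm_tendsto_zero]
  simpa [Function.comp_def, hsqrt] using
    ((ENNReal.continuous_rpow_const (y := 2⁻¹)).tendsto 0).comp hsq

lemma tsum_enorm_sq_ne_top_of_norm_le_inv_two_pow {E : Type*} [SeminormedAddGroup E]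
    {x : ℕ → E} (hx : ∀ k, ‖x k‖ ≤ 2⁻¹ ^ k) : ∑' k, ‖x k‖ₑ ^ 2 ≠ ∞ := by
  refine ne_top_of_le_ne_top (b := ∑' k : ℕ, (2⁻¹ : ℝ≥0∞) ^ k) ?_
    (ENNReal.tsum_le_tsum fun k => ?_)
  · rw [ENNReal.tsum_geometric, ENNReal.one_sub_inv_two, inv_inv]
    exact ENNReal.ofNat_ne_top
  · have hk : ‖x k‖ₑ ≤ 2⁻¹ ^ k := by
      rw [← ofReal_norm, ← ENNReal.ofReal_ofNat 2, ← ENNReal.ofReal_inv_of_pos two_pos,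
        ← ENNReal.ofReal_pow (by norm_num)]
      exact ENNReal.ofReal_le_ofReal (hx k)
    calc ‖x k‖ₑ ^ 2 ≤ ‖x k‖ₑ :=
          pow_le_of_le_one zero_le
            (hk.trans (pow_le_one₀ zero_le (ENNReal.inv_le_one.2 one_le_two))) two_ne_zero
      _ ≤ 2⁻¹ ^ k := hk

lemma lintegral_enorm_sq_gaussianReal (v : ℝ≥0) :
    ∫⁻ x, ‖x‖ₑ ^ 2 ∂gaussianReal 0 v = v := by
  have := ofReal_variance (memLp_id_gaussianReal' (μ := 0) (v := v) 2 (by simp))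
  simp only [variance_id_gaussianReal, evariance, id, integral_id_gaussianReal, sub_zero,
    ENNReal.ofReal_coe_nnreal] at this
  exact this.symm

section GaussianCoordinates

variable {E : Type*} [NormedAddCommGroup E] [InnerProductSpace ℝ E] [MeasurableSpace E]

lemma charFn_eq_charFun (μ : Measure E) : charFn μ = charFun μ := by
  ext ξ
  simp [charFn, charFun_apply, mul_comm]

variable [OpensMeasurableSpace E] {μ : Measure E} [IsFiniteMeasure μ] {R : E →L[ℝ] E}

lemma map_innerSL_eq_gaussianReal
    (hchar : ∀ ξ : E, charFn μ ξ = Complex.exp (-(⟪R ξ, ξ⟫ : ℝ) / 2)) {h : E} {v : ℝ≥0}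
    (hv : ⟪R h, h⟫ = v) :
    μ.map (innerSL ℝ h) = gaussianReal 0 v := by
  refine Measure.ext_of_charFun (funext fun t => ?_)
  rw [charFun_map_eq_charFunDual_smul, ← map_smul,
    show innerSL ℝ (t • h) = InnerProductSpace.toDualMap ℝ E (t • h) from rfl,
    ← charFun_eq_charFunDual_toDualMap, ← charFn_eq_charFun, hchar, charFun_gaussianReal,
    map_smul, real_inner_smul_left, real_inner_smul_right, hv]
  congr 1
  push_cast
  ring

lemma lintegral_enorm_inner_sq
    (hchar : ∀ ξ : E, charFn μ ξ = Complex.exp (-(⟪R ξ, ξ⟫ : ℝ) / 2)) {Q : E →L[ℝ] E}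
    (hQ : Q.comp Q = R) (hQsa : (Q : E →ₗ[ℝ] E).IsSymmetric) (h : E) :
    ∫⁻ z, ‖⟪h, z⟫‖ₑ ^ 2 ∂μ = ‖Q h‖ₑ ^ 2 := by
  have hv : ⟪R h, h⟫ = ((‖Q h‖₊ ^ 2 : ℝ≥0) : ℝ) := by
    rw [← hQ]
    exact (hQsa (Q h) h).trans (by simp)
  calc ∫⁻ z, ‖⟪h, z⟫‖ₑ ^ 2 ∂μ = ∫⁻ x, ‖x‖ₑ ^ 2 ∂(μ.map (innerSL ℝ h)) :=
        (lintegral_map (f := fun x : ℝ => ‖x‖ₑ ^ 2) (by fun_prop) (by fun_prop)).symm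
    _ = ‖Q h‖ₑ ^ 2 := by
        rw [map_innerSL_eq_gaussianReal hchar hv, lintegral_enorm_sq_gaussianReal]
        simp [enorm_eq_nnnorm]

lemma exists_measure_compl_eq_zero_and_smul_add_notMem [CompleteSpace E]
    (hchar : ∀ ξ : E, charFn μ ξ = Complex.exp (-(⟪R ξ, ξ⟫ : ℝ) / 2)) {Q : E →L[ℝ] E}
    (hQ : Q.comp Q = R) (hQsa : (Q : E →ₗ[ℝ] E).IsSymmetric) {a : E}
    (ha : a ∉ Set.range Q) :
    ∃ T : Set E, MeasurableSet T ∧ μ Tᶜ = 0 ∧ ∀ t : ℝ, t ≠ 0 → ∀ z ∈ T, t • a + z ∉ T := by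
  choose h hha hQh using fun k : ℕ =>
    exists_inner_eq_one_and_norm_apply_le hQsa ha (pow_pos (inv_pos.2 two_pos) k)
  refine ⟨{z | Tendsto (fun k => ⟪h k, z⟫) atTop (𝓝 0)},
    measurableSet_tendsto _ fun k => by fun_prop, ?_, ?_⟩
  · refine ae_tendsto_zero_of_tsum_lintegral_enorm_sq_ne_top (fun k => by fun_prop) ?_
    simp only [lintegral_enorm_inner_sq hchar hQ hQsa]
    exact tsum_enorm_sq_ne_top_of_norm_le_inv_two_pow hQh
  · intro t ht z hz hz'
    have hha' : ∀ k, ⟪h k, a⟫ = 1 := fun k => (real_inner_comm _ _).trans (hha k)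
    have hshift : Tendsto (fun k => ⟪h k, t • a + z⟫) atTop (𝓝 t) := by
      simp only [inner_add_right, real_inner_smul_right, hha', mul_one]
      simpa using hz.const_add t
    exact ht (tendsto_nhds_unique hshift hz')

end GaussianCoordinates

theorem not_strong_feller_of_not_null_controllable_general
    (μ0 : Measure H) [IsProbabilityMeasure μ0]
    (R Q U : H →L[ℝ] H)
    (hchar : ∀ ξ : H, charFn μ0 ξ = Complex.exp (-(⟪R ξ, ξ⟫ : ℝ) / 2))
    (hQ : Q.comp Q = R) (hQsa : ∀ x y : H, ⟪Q x, y⟫ = ⟪x, Q y⟫)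
    (x₀ : H) (hx₀ : ∀ h : H, Q h ≠ U x₀) :
    ∃ f : H → ℝ, Measurable f ∧ (∃ C, ∀ x, |f x| ≤ C) ∧
      ¬ Continuous (fun x : H => ∫ y, f y ∂(μ0.map (fun z => U x + z))) := by
  obtain ⟨T, hT, hTc, hdisj⟩ :=
    exists_measure_compl_eq_zero_and_smul_add_notMem hchar hQ hQsa fun ⟨b, hb⟩ => hx₀ b hb
  set p := fun x : H => ∫ y, T.indicator (1 : H → ℝ) y ∂(μ0.map (fun z => U x + z))
  have hp : ∀ x, p x = μ0.real ((fun z => U x + z) ⁻¹' T) := fun x => by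
    simp only [p]
    rw [integral_indicator_one hT, map_measureReal_apply (by fun_prop) hT]
  have hp0 : p 0 = 1 := by
    simp [hp, measureReal_def, (prob_compl_eq_zero_iff hT).1 hTc]
  have hpt : ∀ t : ℝ, t ≠ 0 → p (t • x₀) = 0 := fun t ht => by
    rw [hp, measureReal_eq_zero_iff]
    exact measure_mono_null (fun z hz hzT => hdisj t ht z hzT (by simpa using hz)) hTc
  refine ⟨T.indicator 1, measurable_one.indicator hT, ⟨1, fun x => ?_⟩, fun hcont => ?_⟩
  · by_cases hx : x ∈ T <;> simp [hx]
  have hline : Continuous fun t : ℝ => p (t • x₀) :=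
    hcont.comp (continuous_id.smul continuous_const)
  have hlim : Tendsto (fun t : ℝ => p (t • x₀)) (𝓝[≠] 0) (𝓝 (p 0)) := by
    simpa only [zero_smul] using (hline.tendsto 0).mono_left nhdsWithin_le_nhds
  rw [hp0] at hlim
  exact one_ne_zero (tendsto_nhds_unique hlim
    (tendsto_const_nhds.congr' (eventually_nhdsWithin_of_forall fun t ht => (hpt t ht).symm)))

/-- for the Gaussian transition operator `pf(x) = ∫ f dN(Ux,R)` (here
`N(Ux,R)` is the translate by `Ux` of the centered Gaussian `μ0` with covariance
`R = Q²`), if some `Ux₀` is not in the range of `R^{1/2} = Q`, then `p` is not strong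
Feller: some bounded measurable `f` has discontinuous `pf`. -/
theorem not_strong_feller_of_not_null_controllable
    (μ0 : Measure H) [IsProbabilityMeasure μ0]
    (R Q U : H →L[ℝ] H)
    (hchar : ∀ ξ : H, charFn μ0 ξ = Complex.exp (-(⟪R ξ, ξ⟫ : ℝ) / 2))
    (hQ : Q.comp Q = R) (hQsa : ∀ x y : H, ⟪Q x, y⟫ = ⟪x, Q y⟫)
    (hQpos : ∀ x : H, 0 ≤ ⟪Q x, x⟫)
    (x₀ : H) (hx₀ : ∀ h : H, Q h ≠ U x₀) :
    ∃ f : H → ℝ, Measurable f ∧ (∃ C, ∀ x, |f x| ≤ C) ∧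
      ¬ Continuous (fun x : H => ∫ y, f y ∂(μ0.map (fun z => U x + z))) :=
  not_strong_feller_of_not_null_controllable_general μ0 R Q U hchar hQ hQsa x₀ hx₀
end
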